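/- Let n ≥ 2 and let G ∈ 𝒢_{2n} satisfy F(G) = n−1. If G is minimal, then G is n-regular (every vertex has degree n) and both the vertex connectivity κ(G) and the edge connectivity λ(G) are equal to n. -/

import Mathlib

/-!
Let `M` be a perfect matching with `f(G, M) = n - 1`. For any two edges `ab`, `cd` of `M`, the
`n - 2` other edges do not force `M`, so another perfect matching agrees with `M` off `{ab, cd}`;
it must use `ac, bd` or `ad, bc`. Thus any two edges of `M` lie on an `M`-alternating 4-cycle,
so every vertex is adjacent to an endpoint of every `M`-edge not containing it (degree `≥ n`),
and a vertex separator meets every `M`-edge (`κ ≥ n`).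

By minimality, for an edge `x ∉ M` a forcing set of `M` in `G - x` of size `≤ n - 2` misses two
edges of `M`, and re-matching these two edges in `G` must use `x`. A re-matching of a given pair
creates at most two new edges, so `|E| ≤ n + 2 * (n choose 2) = n²`; with degrees `≥ n` on `2n`
vertices, `G` is `n`-regular. Finally, in a graph on `2n` vertices of minimum degree `n`, the
smaller side of an edge cut already sends `n` edges across it, so `λ ≥ n`.
-/

open SimpleGraph

/-- `M` is a perfect matching of the simple graph `G`, viewed as a set of edges:
the edges of `M` are pairwise disjoint edges of `G` covering every vertex. -/
def IsPM {V : Type*} (G : SimpleGraph V) (M : Set (Sym2 V)) : Prop :=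
  M ⊆ G.edgeSet ∧
  (∀ e ∈ M, ∀ f ∈ M, e ≠ f → ∀ v : V, v ∈ e → v ∉ f) ∧
  (∀ v : V, ∃ e ∈ M, v ∈ e)

/-- `S` is a forcing set of the perfect matching `M` of `G`:
`S ⊆ M` and `M` is the unique perfect matching of `G` containing `S`. -/
def IsForcingSet {V : Type*} (G : SimpleGraph V) (M S : Set (Sym2 V)) : Prop :=
  S ⊆ M ∧ ∀ M', IsPM G M' → S ⊆ M' → M' = M

/-- The forcing number `f(G,M)`: smallest cardinality of a forcing set of `M`. -/
noncomputable def forcingNum {V : Type*} (G : SimpleGraph V) (M : Set (Sym2 V)) : ℕ :=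
  sInf {k | ∃ S, IsForcingSet G M S ∧ S.ncard = k}

/-- The minimum forcing number `f(G)`. -/
noncomputable def minForcing {V : Type*} (G : SimpleGraph V) : ℕ :=
  sInf {k | ∃ M, IsPM G M ∧ forcingNum G M = k}

/-- The maximum forcing number `F(G)`. -/
noncomputable def maxForcing {V : Type*} (G : SimpleGraph V) : ℕ :=
  sSup {k | ∃ M, IsPM G M ∧ forcingNum G M = k}

/-- Vertex connectivity `κ(G)`: least size of a set of vertices whose deletion
disconnects the graph or leaves at most one vertex. -/
noncomputable def vertexConn {V : Type*} (G : SimpleGraph V) : ℕ :=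
  sInf {k | ∃ X : Set V, X.ncard = k ∧ (¬ (G.induce Xᶜ).Connected ∨ Xᶜ.ncard ≤ 1)}

/-- Edge connectivity `λ(G)`: least size of a set of edges whose deletion
disconnects the graph. -/
noncomputable def edgeConn {V : Type*} (G : SimpleGraph V) : ℕ :=
  sInf {k | ∃ F : Set (Sym2 V), F ⊆ G.edgeSet ∧ F.ncard = k ∧ ¬ (G.deleteEdges F).Connected}

/-- `G` is `l`-extendable: `G` is connected, has at least `2l+2` vertices, has a
perfect matching, and every matching of size `l` extends to a perfect matching. -/
def IsExtendable {V : Type*} [Fintype V] (G : SimpleGraph V) (l : ℕ) : Prop :=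
  G.Connected ∧ 2 * l + 2 ≤ Fintype.card V ∧ (∃ M, IsPM G M) ∧
    ∀ N : Set (Sym2 V), N ⊆ G.edgeSet →
      (∀ e ∈ N, ∀ f ∈ N, e ≠ f → ∀ v : V, v ∈ e → v ∉ f) → N.ncard = l →
      ∃ M, IsPM G M ∧ N ⊆ M

/-- `G` is factor-critical: deleting any vertex leaves a graph with a perfect matching. -/
def IsFactorCritical {V : Type*} (G : SimpleGraph V) : Prop :=
  ∀ v : V, ∃ M, IsPM (G.induce {v}ᶜ) M

/-- `o(G)`: the number of connected components of odd order. -/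
noncomputable def oddComponents {V : Type*} (G : SimpleGraph V) : ℕ :=
  {c : G.ConnectedComponent | Odd c.supp.ncard}.ncard

/-- `G` belongs to `𝒦_{n,n}⁺`: it is obtained from `K_{n,n}` by adding edges inside one
partite set; equivalently there is an independent set `A` of size `n` all of whose
vertices are adjacent to all vertices outside `A`. -/
def InKnnPlus {V : Type*} (n : ℕ) (G : SimpleGraph V) : Prop :=
  ∃ A : Set V, A.ncard = n ∧ (∀ a ∈ A, ∀ b ∈ A, ¬ G.Adj a b) ∧
    ∀ a ∈ A, ∀ b ∉ A, G.Adj a b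

/-- `M` is a perfect matching of the subgraph of `G` induced by the vertex set `T`. -/
def IsPMOn {V : Type*} (G : SimpleGraph V) (T : Set V) (M : Set (Sym2 V)) : Prop :=
  M ⊆ G.edgeSet ∧ (∀ e ∈ M, ∀ w : V, w ∈ e → w ∈ T) ∧
  (∀ e ∈ M, ∀ f ∈ M, e ≠ f → ∀ v : V, v ∈ e → v ∉ f) ∧
  (∀ w ∈ T, ∃ e ∈ M, w ∈ e)

/-- The forcing number of the perfect matching `M` of the subgraph of `G`
induced by the vertex set `T`. -/
noncomputable def forcingNumOn {V : Type*} (G : SimpleGraph V) (T : Set V)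
    (M : Set (Sym2 V)) : ℕ :=
  sInf {k | ∃ S, S ⊆ M ∧ (∀ M', IsPMOn G T M' → S ⊆ M' → M' = M) ∧ S.ncard = k}

/-- `{i,j}` is one of the `k` special pairs `{2t, 2t+1}` (0-indexed), `t < k`. -/
def pairIdx (k : ℕ) {n : ℕ} (i j : Fin n) : Prop :=
  ∃ t, t < k ∧ ((i.val = 2 * t ∧ j.val = 2 * t + 1) ∨ (j.val = 2 * t ∧ i.val = 2 * t + 1))

/-- The graph `H_k` on vertices `u_0,…,u_{n-1}` (left copy) and `v_0,…,v_{n-1}`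
(right copy): edges `u_i v_i` for all `i`; `u_{2t} u_{2t+1}` and `v_{2t} v_{2t+1}`
for `t < k`; and `u_i v_j`, `u_j v_i` for every pair `i ≠ j` that is not one of the
`k` special pairs. -/
def Hgraph (n k : ℕ) : SimpleGraph (Fin n ⊕ Fin n) :=
  SimpleGraph.fromRel (fun x y =>
    match x, y with
    | Sum.inl i, Sum.inr j => i = j ∨ ¬ pairIdx k i j
    | Sum.inl i, Sum.inl j => pairIdx k i j
    | Sum.inr i, Sum.inr j => pairIdx k i j
    | Sum.inr _, Sum.inl _ => False)

/-- The perfect matching `M₀ = {u_i v_i : i}` of `H_k`. -/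
def M0 (n : ℕ) : Set (Sym2 (Fin n ⊕ Fin n)) :=
  {e | ∃ i : Fin n, e = s(Sum.inl i, Sum.inr i)}

theorem alternating_of_matching_on_four {α : Type*} {R : α → α → Prop}
    (symm : ∀ v w, R v w → R w v) (irrefl : ∀ v, ¬ R v v)
    (unique : ∀ v w w', R v w → R v w' → w = w') {a b c d : α}
    (hab : a ≠ b) (ha : a ≠ c ∧ a ≠ d) (hb : b ≠ c ∧ b ≠ d)
    (hpartner : ∀ v, v = a ∨ v = b ∨ v = c → ∃ w, (w = a ∨ w = b ∨ w = c ∨ w = d) ∧ R v w)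
    (hnot : ¬ (R a b ∧ R c d)) : (R a c ∧ R b d) ∨ (R a d ∧ R b c) := by
  obtain ⟨y, hy, hay⟩ := hpartner a (by simp)
  obtain ⟨z, hz, hbz⟩ := hpartner b (by simp)
  obtain ⟨t, ht, hct⟩ := hpartner c (by simp)
  clear hpartner
  grind

section

variable {V : Type*} {G : SimpleGraph V} {M M' : Set (Sym2 V)}

namespace IsPM

theorem eq_of_mem_of_mem (hM : IsPM G M) {e f : Sym2 V} (he : e ∈ M) (hf : f ∈ M) {v : V}
    (hve : v ∈ e) (hvf : v ∈ f) : e = f :=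
  by_contra fun h => hM.2.1 e he f hf h v hve hvf

theorem eq_of_mk_mem_of_mk_mem (hM : IsPM G M) {v w w' : V} (h : s(v, w) ∈ M)
    (h' : s(v, w') ∈ M) : w = w' :=
  Sym2.congr_right.1 (hM.eq_of_mem_of_mem h h' (Sym2.mem_mk_left v w) (Sym2.mem_mk_left v w'))

theorem exists_mk_mem (hM : IsPM G M) (v : V) : ∃ w, s(v, w) ∈ M := by
  obtain ⟨e, he, hve⟩ := hM.2.2 v
  exact ⟨Sym2.Mem.other hve, by rwa [Sym2.other_spec]⟩

theorem eq_of_subset (hM : IsPM G M) (hM' : IsPM G M') (h : M ⊆ M') : M' = M := by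
  refine (h.antisymm fun x hx => ?_).symm
  obtain ⟨e, he, hve⟩ := hM.2.2 x.out.1
  rwa [hM'.eq_of_mem_of_mem hx (h he) (Sym2.out_fst_mem x) hve]

theorem deleteEdges (hM : IsPM G M) {F : Set (Sym2 V)} (hF : Disjoint M F) :
    IsPM (G.deleteEdges F) M := by
  refine ⟨fun e he => ?_, hM.2.1, hM.2.2⟩
  rw [edgeSet_deleteEdges]
  exact ⟨hM.1 he, hF.notMem_of_mem_left he⟩

theorem two_mul_ncard [Fintype V] (hM : IsPM G M) : 2 * M.ncard = Fintype.card V := by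
  classical
  have hcover : (Finset.univ : Finset V) = M.toFinset.biUnion Sym2.toFinset := by
    ext v
    simpa [Sym2.mem_toFinset] using hM.2.2 v
  have hdisj : (M.toFinset : Set (Sym2 V)).PairwiseDisjoint Sym2.toFinset :=
    fun e he f hf hef => Finset.disjoint_left.2 fun v hve hvf =>
      hM.2.1 e (by simpa using he) f (by simpa using hf) hef v
        (Sym2.mem_toFinset.1 hve) (Sym2.mem_toFinset.1 hvf)
  rw [← Finset.card_univ, hcover, Finset.card_biUnion hdisj,
    Finset.sum_congr rfl fun e he => Sym2.card_toFinset_of_not_isDiag e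
      (G.not_isDiag_of_mem_edgeSet (hM.1 (by simpa using he))),
    Finset.sum_const, smul_eq_mul, Set.ncard_eq_toFinset_card', mul_comm]

theorem ncard_eq [Fintype V] (hM : IsPM G M) (hM' : IsPM G M') : M'.ncard = M.ncard := by
  have := hM.two_mul_ncard
  have := hM'.two_mul_ncard
  omega

theorem ncard_sdiff_le [Fintype V] (hM : IsPM G M) (hM' : IsPM G M') {T : Set (Sym2 V)}
    (hsub : M \ T ⊆ M') : (M' \ M).ncard ≤ T.ncard := by
  have := Set.le_ncard_sdiff T M
  calc (M' \ M).ncard ≤ (M' \ (M \ T)).ncard :=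
        Set.ncard_le_ncard (Set.sdiff_subset_sdiff_right Set.sdiff_subset)
    _ = M'.ncard - (M \ T).ncard := Set.ncard_sdiff hsub
    _ ≤ T.ncard := by rw [hM.ncard_eq hM']; omega

theorem exists_mem_of_mem_sdiff (hM : IsPM G M) (hM' : IsPM G M') {T : Set (Sym2 V)}
    (hsub : M \ T ⊆ M') {x : Sym2 V} (hx : x ∈ M' \ M) {v : V} (hv : v ∈ x) :
    ∃ e ∈ T, v ∈ e := by
  obtain ⟨e, he, hve⟩ := hM.2.2 v
  refine ⟨e, by_contra fun heT => hx.2 ?_, hve⟩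
  rwa [hM'.eq_of_mem_of_mem hx.1 (hsub ⟨he, heT⟩) hv hve]

theorem adj_of_sdiff_pair_subset (hM : IsPM G M) (hM' : IsPM G M') {a b c d : V}
    (hab : s(a, b) ∈ M) (hcd : s(c, d) ∈ M) (hne : s(a, b) ≠ s(c, d))
    (hsub : M \ {s(a, b), s(c, d)} ⊆ M') (hM'M : M' ≠ M) :
    (G.Adj a c ∧ G.Adj b d) ∨ (G.Adj a d ∧ G.Adj b c) := by
  set T : Set (Sym2 V) := {s(a, b), s(c, d)}
  have hTM : T ⊆ M := Set.insert_subset hab (Set.singleton_subset_iff.2 hcd)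
  have hpartner : ∀ v, (∃ e ∈ T, v ∈ e) → ∃ w, (∃ e ∈ T, w ∈ e) ∧ s(v, w) ∈ M' := by
    rintro v ⟨e, he, hve⟩
    obtain ⟨w, hw⟩ := hM'.exists_mk_mem v
    refine ⟨w, ?_, hw⟩
    by_cases hwM : s(v, w) ∈ M
    · exact ⟨e, he, hM.eq_of_mem_of_mem hwM (hTM he) (Sym2.mem_mk_left v w) hve ▸
        Sym2.mem_mk_right v w⟩
    · exact hM.exists_mem_of_mem_sdiff hM' hsub ⟨hw, hwM⟩ (Sym2.mem_mk_right v w)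
  have hdisj := hM.2.1 _ hab _ hcd hne
  have ha := hdisj a (Sym2.mem_mk_left a b)
  have hb := hdisj b (Sym2.mem_mk_right a b)
  simp only [Sym2.mem_iff, not_or] at ha hb
  have hnot : ¬ (s(a, b) ∈ M' ∧ s(c, d) ∈ M') := fun h => hM'M <|
    hM.eq_of_subset hM' fun e he => by
      by_cases heT : e ∈ T
      · rcases heT with rfl | rfl
        exacts [h.1, h.2]
      · exact hsub ⟨he, heT⟩
  have := alternating_of_matching_on_four (R := fun v w => s(v, w) ∈ M')
    (fun v w => by simp only [Sym2.eq_swap, imp_self]) (fun v h => G.irrefl (hM'.1 h))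
    (fun _ _ _ => hM'.eq_of_mk_mem_of_mk_mem) (G.ne_of_adj (hM.1 hab)) ha hb
    (fun v hv => by simpa [T, or_assoc] using hpartner v (by simp [T]; tauto)) hnot
  rcases this with ⟨h₁, h₂⟩ | ⟨h₁, h₂⟩
  exacts [.inl ⟨hM'.1 h₁, hM'.1 h₂⟩, .inr ⟨hM'.1 h₁, hM'.1 h₂⟩]

theorem isForcingSet_self (hM : IsPM G M) : IsForcingSet G M M :=
  ⟨subset_rfl, fun _ hM' h => hM.eq_of_subset hM' h⟩

theorem exists_isForcingSet_ncard_eq (hM : IsPM G M) :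
    ∃ S, IsForcingSet G M S ∧ S.ncard = forcingNum G M :=
  Nat.sInf_mem (s := {k | ∃ S, IsForcingSet G M S ∧ S.ncard = k})
    ⟨_, M, hM.isForcingSet_self, rfl⟩

theorem forcingNum_le_ncard (hM : IsPM G M) : forcingNum G M ≤ M.ncard :=
  Nat.sInf_le (by exact ⟨M, hM.isForcingSet_self, rfl⟩)

end IsPM

theorem bddAbove_forcingNum [Finite V] (G : SimpleGraph V) :
    BddAbove {k | ∃ M, IsPM G M ∧ forcingNum G M = k} := by
  refine ⟨Nat.card (Sym2 V), ?_⟩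
  rintro _ ⟨M, hM, rfl⟩
  exact hM.forcingNum_le_ncard.trans (Set.ncard_le_card M)

theorem IsPM.forcingNum_le_maxForcing [Finite V] (hM : IsPM G M) :
    forcingNum G M ≤ maxForcing G :=
  le_csSup (bddAbove_forcingNum G) (by exact ⟨M, hM, rfl⟩)

theorem exists_forcingNum_eq_maxForcing [Finite V] (h : ∃ M, IsPM G M) :
    ∃ M, IsPM G M ∧ forcingNum G M = maxForcing G :=
  have ⟨M, hM⟩ := h
  Nat.sSup_mem (s := {k | ∃ M, IsPM G M ∧ forcingNum G M = k}) ⟨_, M, hM, rfl⟩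
    (bddAbove_forcingNum G)

theorem exists_ne_of_ncard_lt_forcingNum {S : Set (Sym2 V)} (hSM : S ⊆ M)
    (hS : S.ncard < forcingNum G M) : ∃ M', IsPM G M' ∧ S ⊆ M' ∧ M' ≠ M := by
  by_contra! h
  exact hS.not_ge (Nat.sInf_le ⟨S, ⟨hSM, h⟩, rfl⟩)

theorem exists_ne_of_ncard_le_forcingNum_add_one [Finite V]
    (hf : M.ncard ≤ forcingNum G M + 1) {T : Set (Sym2 V)} (hTM : T ⊆ M) (hT : T.ncard = 2) :
    ∃ M', IsPM G M' ∧ M \ T ⊆ M' ∧ M' ≠ M := by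
  refine exists_ne_of_ncard_lt_forcingNum Set.sdiff_subset ?_
  have := Set.ncard_le_ncard hTM
  rw [Set.ncard_sdiff hTM]
  omega

theorem IsPM.exists_pair_of_maxForcing_deleteEdges_le [Finite V] (hM : IsPM G M)
    {x : Sym2 V} (hx : x ∈ G.edgeSet \ M) (h : maxForcing (G.deleteEdges {x}) + 2 ≤ M.ncard) :
    ∃ T ⊆ M, T.ncard = 2 ∧ ∀ M', IsPM G M' → M \ T ⊆ M' → M' ≠ M → x ∈ M' := by
  have hMx := hM.deleteEdges (Set.disjoint_singleton_right.2 hx.2)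
  obtain ⟨S, ⟨hSM, hS⟩, hScard⟩ := hMx.exists_isForcingSet_ncard_eq
  have := hMx.forcingNum_le_maxForcing
  obtain ⟨T, hTS, hT⟩ := Set.exists_subset_card_eq (s := M \ S) (n := 2)
    (by rw [Set.ncard_sdiff hSM]; omega)
  refine ⟨T, hTS.trans Set.sdiff_subset, hT, fun M' hM' hsub hne => by_contra fun hxM' => hne ?_⟩
  refine hS M' (hM'.deleteEdges (Set.disjoint_singleton_right.2 hxM')) fun e he => hsub ⟨hSM he, ?_⟩
  exact fun heT => (hTS heT).2 he

/-- Any two edges `ab`, `cd` of `M` lie on an `M`-alternating 4-cycle. -/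
def PairwiseAlternating (G : SimpleGraph V) (M : Set (Sym2 V)) : Prop :=
  ∀ ⦃a b c d : V⦄, s(a, b) ∈ M → s(c, d) ∈ M → s(a, b) ≠ s(c, d) →
    (G.Adj a c ∧ G.Adj b d) ∨ (G.Adj a d ∧ G.Adj b c)

theorem IsPM.pairwiseAlternating [Finite V] (hM : IsPM G M)
    (hf : M.ncard ≤ forcingNum G M + 1) : PairwiseAlternating G M := by
  intro a b c d hab hcd hne
  obtain ⟨M', hM', hsub, hM'M⟩ := exists_ne_of_ncard_le_forcingNum_add_one hf
    (Set.insert_subset hab (Set.singleton_subset_iff.2 hcd)) (Set.ncard_pair hne)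
  exact hM.adj_of_sdiff_pair_subset hM' hab hcd hne hsub hM'M

namespace PairwiseAlternating

theorem adj_or_adj (hA : PairwiseAlternating G M) (hM : IsPM G M) {a b w : V}
    (hab : s(a, b) ∈ M) (hwa : w ≠ a) (hwb : w ≠ b) : G.Adj w a ∨ G.Adj w b := by
  obtain ⟨w', hw'⟩ := hM.exists_mk_mem w
  have hne : s(a, b) ≠ s(w, w') := fun h => by
    rcases Sym2.mem_iff.1 (h ▸ Sym2.mem_mk_left w w') with h | h
    exacts [hwa h, hwb h]
  rcases hA hab hw' hne with ⟨h, -⟩ | ⟨-, h⟩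
  exacts [.inl h.symm, .inr h.symm]

theorem ncard_le_ncard_neighborSet [Finite V] (hA : PairwiseAlternating G M) (hM : IsPM G M)
    (v : V) : M.ncard ≤ (G.neighborSet v).ncard := by
  have hmeet : ∀ e ∈ M, ∃ w ∈ G.neighborSet v, w ∈ e := by
    intro e he
    induction e using Sym2.ind with
    | _ a b =>
      by_cases hva : v = a
      · exact ⟨b, hva ▸ hM.1 he, Sym2.mem_mk_right a b⟩
      by_cases hvb : v = b
      · exact ⟨a, hvb ▸ (hM.1 he).symm, Sym2.mem_mk_left a b⟩
      rcases hA.adj_or_adj hM he hva hvb with h | h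
      exacts [⟨a, h, Sym2.mem_mk_left a b⟩, ⟨b, h, Sym2.mem_mk_right a b⟩]
  have : Nonempty V := ⟨v⟩
  choose! φ hφ hφe using hmeet
  exact Set.ncard_le_ncard_of_injOn φ hφ
    (fun e he f hf h => hM.eq_of_mem_of_mem he hf (hφe e he) (h ▸ hφe f hf))

/-- An `M`-edge `vv'` avoiding `X` would make `G - X` connected, as every other vertex is
adjacent to `v` or `v'`; so the `M`-partner of each vertex outside `X` lies in `X`. -/
theorem ncard_compl_le [Finite V] (hA : PairwiseAlternating G M) (hM : IsPM G M)
    {X : Set V} (hX : ¬ (G.induce Xᶜ).Connected) : Xᶜ.ncard ≤ X.ncard := by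
  choose p hp using hM.exists_mk_mem
  refine Set.ncard_le_ncard_of_injOn p (fun v hv => ?_) (fun v _ w _ h => ?_)
  · by_contra hpv
    let H := G.induce Xᶜ
    have hvp : H.Adj ⟨v, hv⟩ ⟨p v, hpv⟩ := hM.1 (hp v)
    have hreach : ∀ t : ↥Xᶜ, H.Reachable t ⟨v, hv⟩ := by
      rintro ⟨t, ht⟩
      by_cases htv : t = v
      · subst htv
        rfl
      by_cases htp : t = p v
      · subst htp
        exact hvp.reachable.symm
      rcases hA.adj_or_adj hM (hp v) htv htp with h | h
      · exact (show H.Adj ⟨t, ht⟩ ⟨v, hv⟩ from h).reachable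
      · exact (show H.Adj ⟨t, ht⟩ ⟨p v, hpv⟩ from h).reachable.trans hvp.reachable.symm
    have : Nonempty ↥Xᶜ := ⟨⟨v, hv⟩⟩
    exact hX ⟨fun x y => (hreach x).trans (hreach y).symm⟩
  · have := hM.eq_of_mem_of_mem (hp v) (hp w) (Sym2.mem_mk_right v (p v))
      (by rw [h]; exact Sym2.mem_mk_right w (p w))
    rwa [h, Sym2.congr_left] at this

theorem ncard_le_vertexConn [Fintype V] (hA : PairwiseAlternating G M) (hM : IsPM G M) :
    M.ncard ≤ vertexConn G := by
  refine le_csInf ⟨_, Set.univ, rfl, .inr (by simp)⟩ ?_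
  rintro _ ⟨X, rfl, hX⟩
  have hsum := Set.ncard_add_ncard_compl X
  rw [Nat.card_eq_fintype_card, ← hM.two_mul_ncard] at hsum
  rcases hX with hX | hX
  · have := hA.ncard_compl_le hM hX
    omega
  · omega

end PairwiseAlternating

theorem IsPM.ncard_edgeSet_le [Fintype V] (hM : IsPM G M) (hf : M.ncard ≤ forcingNum G M + 1)
    (hforced : ∀ x ∈ G.edgeSet \ M, ∃ T ⊆ M, T.ncard = 2 ∧
      ∀ M', IsPM G M' → M \ T ⊆ M' → M' ≠ M → x ∈ M') :
    G.edgeSet.ncard ≤ M.ncard * M.ncard := by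
  classical
  choose! N hN hsub hne using fun (T : Set (Sym2 V)) (hT : T ⊆ M ∧ T.ncard = 2) =>
    exists_ne_of_ncard_le_forcingNum_add_one hf hT.1 hT.2
  have hpairs : ∀ s ∈ M.toFinset.powersetCard 2, (s : Set (Sym2 V)) ⊆ M ∧
      (s : Set (Sym2 V)).ncard = 2 := fun s hs => by
    rw [Finset.mem_powersetCard] at hs
    exact ⟨Set.subset_toFinset.1 hs.1, (Set.ncard_coe_finset s).trans hs.2⟩
  have hcover : G.edgeSet \ M ⊆ ⋃ s ∈ M.toFinset.powersetCard 2, N s \ M := by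
    intro x hx
    obtain ⟨T, hTM, hT, hxT⟩ := hforced x hx
    refine Set.mem_biUnion (x := T.toFinset) ?_ ⟨?_, hx.2⟩
    · rw [Finset.mem_coe, Finset.mem_powersetCard, ← Set.ncard_eq_toFinset_card']
      exact ⟨Set.toFinset_subset_toFinset.2 hTM, hT⟩
    · rw [Set.coe_toFinset]
      exact hxT _ (hN T ⟨hTM, hT⟩) (hsub T ⟨hTM, hT⟩) (hne T ⟨hTM, hT⟩)
  have hsmall : ∀ s ∈ M.toFinset.powersetCard 2, (N s \ M).ncard ≤ 2 := fun s hs =>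
    (hpairs s hs).2 ▸ hM.ncard_sdiff_le (hN s (hpairs s hs)) (hsub s (hpairs s hs))
  calc G.edgeSet.ncard = (G.edgeSet \ M).ncard + M.ncard :=
        (Set.ncard_sdiff_add_ncard_of_subset hM.1).symm
    _ ≤ ∑ s ∈ M.toFinset.powersetCard 2, (N s \ M).ncard + M.ncard :=
        Nat.add_le_add_right ((Set.ncard_le_ncard hcover).trans
          (Finset.set_ncard_biUnion_le _ _)) _
    _ ≤ M.ncard.choose 2 * 2 + M.ncard := by
        grw [Finset.sum_le_sum hsmall, Finset.sum_const, Finset.card_powersetCard,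
          ← Set.ncard_eq_toFinset_card', smul_eq_mul]
    _ = M.ncard * M.ncard := by
        rw [Nat.choose_two_right, Nat.div_mul_cancel (Nat.even_mul_pred_self _).two_dvd]
        cases M.ncard <;> simp [Nat.mul_succ]

theorem ncard_neighborSet_eq_of_two_mul_ncard_edgeSet_le [Fintype V] {n : ℕ}
    (hE : 2 * G.edgeSet.ncard ≤ Fintype.card V * n) (hδ : ∀ v, n ≤ (G.neighborSet v).ncard)
    (v : V) : (G.neighborSet v).ncard = n := by
  classical
  have hdeg : ∀ v, (G.neighborSet v).ncard = G.degree v := fun v => by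
    rw [← card_neighborSet_eq_degree, Set.ncard_eq_toFinset_card', Set.toFinset_card]
  have hle : ∀ v ∈ Finset.univ, n ≤ G.degree v := fun v _ => hdeg v ▸ hδ v
  have hsum : ∑ v, G.degree v ≤ ∑ _v : V, n := by
    rw [sum_degrees_eq_twice_card_edges, ← Set.ncard_coe_finset, coe_edgeFinset,
      Finset.sum_const, Finset.card_univ, smul_eq_mul]
    exact hE
  rw [hdeg, (Finset.sum_eq_sum_iff_of_le hle).1 (le_antisymm (Finset.sum_le_sum hle) hsum) v
    (Finset.mem_univ v)]

theorem vertexConn_le_ncard_neighborSet [Finite V] (v : V) :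
    vertexConn G ≤ (G.neighborSet v).ncard := by
  refine Nat.sInf_le ⟨_, rfl, ?_⟩
  rw [or_iff_not_imp_right, not_le, Set.one_lt_ncard_iff_nontrivial, ← Set.nontrivial_coe_sort]
  intro _ hconn
  obtain ⟨u, hu⟩ := hconn.preconnected.exists_adj_of_nontrivial ⟨v, G.irrefl⟩
  exact u.2 hu

theorem not_connected_deleteEdges_incidenceSet [Nontrivial V] (v : V) :
    ¬ (G.deleteEdges (G.incidenceSet v)).Connected := fun hconn => by
  obtain ⟨u, hu⟩ := hconn.preconnected.exists_adj_of_nontrivial v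
  rw [deleteEdges_adj] at hu
  exact hu.2 ⟨hu.1, Sym2.mem_mk_left v u⟩

theorem edgeConn_le_ncard_neighborSet [Nontrivial V] (v : V) :
    edgeConn G ≤ (G.neighborSet v).ncard := by
  classical
  exact Nat.sInf_le ⟨_, G.incidenceSet_subset v,
    Set.ncard_congr' (G.incidenceSetEquivNeighborSet v), not_connected_deleteEdges_incidenceSet v⟩

theorem exists_adj_notMem [Finite V] {n : ℕ} {P : Set V} (hP : P.ncard ≤ n) {r : V}
    (hr : r ∈ P) (hδ : n ≤ (G.neighborSet r).ncard) : ∃ q ∉ P, G.Adj r q := by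
  classical
  have : 0 < P.ncard := (Set.ncard_pos).2 ⟨r, hr⟩
  obtain ⟨q, hq, hqP⟩ := Set.exists_mem_notMem_of_ncard_lt_ncard
    (s := P \ {r}) (t := G.neighborSet r) (by rw [Set.ncard_sdiff_singleton_of_mem hr]; omega)
  exact ⟨q, fun h => hqP ⟨h, (G.ne_of_adj hq).symm⟩, hq⟩

/-- The `deg p ≥ n` cut edges: `pq` for each neighbour `q ∉ P` of `p`, and `r o(r)` for each
neighbour `r ∈ P` of `p`, where `o(r) ∉ P` is a neighbour of `r`. -/
theorem le_ncard_of_forall_adj_mem [Finite V] {n : ℕ} (hδ : ∀ v, n ≤ (G.neighborSet v).ncard)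
    {P : Set V} (hP : P.ncard ≤ n) {p : V} (hp : p ∈ P) {F : Set (Sym2 V)}
    (hF : ∀ r ∈ P, ∀ q ∉ P, G.Adj r q → s(r, q) ∈ F) : n ≤ F.ncard := by
  classical
  have : Nonempty V := ⟨p⟩
  choose! o ho hro using fun r (hr : r ∈ P) => exists_adj_notMem hP hr (hδ r)
  refine (hδ p).trans (Set.ncard_le_ncard_of_injOn
    (fun y => if y ∈ P then s(y, o y) else s(p, y)) (fun y hy => ?_) (fun y hy z hz h => ?_))
  · by_cases hyP : y ∈ P
    · simpa only [if_pos hyP] using hF y hyP (o y) (ho y hyP) (hro y hyP)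
    · simpa only [if_neg hyP] using hF p hp y hyP hy
  · have hpy : p ≠ y := G.ne_of_adj hy
    have hpz : p ≠ z := G.ne_of_adj hz
    have := ho y
    have := ho z
    simp only at h
    split_ifs at h <;> rw [Sym2.eq_iff] at h <;> grind

theorem le_edgeConn [Fintype V] [Nontrivial V] {n : ℕ} (hV : Fintype.card V ≤ 2 * n)
    (hδ : ∀ v, n ≤ (G.neighborSet v).ncard) : n ≤ edgeConn G := by
  obtain ⟨v⟩ := (inferInstance : Nonempty V)
  refine le_csInf ⟨_, _, G.incidenceSet_subset v, rfl,
    not_connected_deleteEdges_incidenceSet v⟩ ?_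
  rintro _ ⟨F, -, rfl, hF⟩
  obtain ⟨u, w, huw⟩ : ∃ u w, ¬ (G.deleteEdges F).Reachable u w := by
    simpa [connected_iff, Preconnected] using hF
  set P := {y | (G.deleteEdges F).Reachable u y}
  have hcut : ∀ r ∈ P, ∀ q ∉ P, G.Adj r q → s(r, q) ∈ F := fun r hr q hq hrq =>
    by_contra fun h => hq (hr.trans (deleteEdges_adj.2 ⟨hrq, h⟩).reachable)
  have hsum := Set.ncard_add_ncard_compl P
  rw [Nat.card_eq_fintype_card] at hsum
  by_cases hP : P.ncard ≤ n
  · exact le_ncard_of_forall_adj_mem hδ hP (Reachable.refl u) hcut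
  · refine le_ncard_of_forall_adj_mem hδ (P := Pᶜ) (by omega) huw fun r hr q hq hrq => ?_
    rw [Sym2.eq_swap]
    exact hcut q (not_not.1 hq) r hr hrq.symm

end

/-- Lemma 2.3(ii), second part. -/
theorem stmt4 {V : Type*} [Fintype V] (n : ℕ) (hn : 2 ≤ n)
    (G : SimpleGraph V) (hcard : Fintype.card V = 2 * n)
    (hPM : ∃ M, IsPM G M) (hF : maxForcing G = n - 1)
    (hmin : ∀ e ∈ G.edgeSet, maxForcing (G.deleteEdges {e}) ≤ n - 2) :
    (∀ v : V, (G.neighborSet v).ncard = n) ∧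
      vertexConn G = n ∧ edgeConn G = n := by
  obtain ⟨M, hM, hMF⟩ := exists_forcingNum_eq_maxForcing hPM
  have hMn : M.ncard = n := by
    have := hM.two_mul_ncard
    omega
  have hf : M.ncard ≤ forcingNum G M + 1 := by omega
  have hA := hM.pairwiseAlternating hf
  have hδ : ∀ v, n ≤ (G.neighborSet v).ncard := hMn ▸ hA.ncard_le_ncard_neighborSet hM
  have hE : G.edgeSet.ncard ≤ n * n := hMn ▸ hM.ncard_edgeSet_le hf fun x hx =>
    hM.exists_pair_of_maxForcing_deleteEdges_le hx (by have := hmin x hx.1; omega)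
  have hdeg := ncard_neighborSet_eq_of_two_mul_ncard_edgeSet_le
    (by rw [hcard, mul_assoc]; exact Nat.mul_le_mul_left 2 hE) hδ
  have : Nontrivial V := Fintype.one_lt_card_iff_nontrivial.1 (by omega)
  obtain ⟨v⟩ := (inferInstance : Nonempty V)
  refine ⟨hdeg, le_antisymm ?_ (hMn ▸ hA.ncard_le_vertexConn hM),
    le_antisymm ?_ (le_edgeConn hcard.le hδ)⟩
  · exact (vertexConn_le_ncard_neighborSet v).trans (hdeg v).le
  · exact (edgeConn_le_ncard_neighborSet v).trans (hdeg v).le
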